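/- arXiv:2510.20140 — 3 statements merged into one kernel-verified Lean document; each statement's English description precedes it below -/
import Mathlib

section
/- Let K ≥ 1 and n ≥ 1. Let R_c^1, …, R_c^K and R_r be n×n complex positive semidefinite Hermitian matrices, let h^1, …, h^K ∈ ℂ^n, and let σ² > 0. Define the reassigned matrices R̃_c^k = R_c^k + (1/K)·R_r for each k, and the SINR ratios γ_k = (h^k)^H R_c^k h^k / ( Σ_{j≠k} (h^k)^H R_c^j h^k + (h^k)^H R_r h^k + σ² ) and γ̃_k = (h^k)^H R̃_c^k h^k / ( Σ_{j≠k} (h^k)^H R̃_c^j h^k + σ² ). Then: (i) each R̃_c^k is positive semidefinite; (ii) Σ_{k=1}^K R̃_c^k = Σ_{k=1}^K R_c^k + R_r (so the total transmit covariance is unchanged); and (iii) γ̃_k ≥ γ_k for every k, with strict inequality γ̃_k > γ_k whenever (h^k)^H R_r h^k > 0. -/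
open Matrix Finset ComplexOrder

/-!
Absorbing `R_r / K` into each user's covariance turns the radar interference `r = hᴴ R_r h` seen
by user `k` into `r / K` of useful signal plus `(K - 1) r / K` of interference, so `γ̃_k` arises
from `γ_k = a / d` by moving the amount `t = r / K` from the denominator to the numerator:
`a / d ≤ (a + t) / (d - t)`, strictly when `t > 0`, as long as `t < d`, which `σ² > 0` guarantees.
-/

theorem Finset.sum_add_inv_card_smul {ι 𝕜 M : Type*} [Fintype ι] [Nonempty ι]
    [DivisionSemiring 𝕜] [CharZero 𝕜] [AddCommMonoid M] [Module 𝕜 M] (A : ι → M) (B : M) :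
    ∑ i, (A i + (Fintype.card ι : 𝕜)⁻¹ • B) = ∑ i, A i + B := by
  rw [sum_add_distrib, sum_const, card_univ, ← Nat.cast_smul_eq_nsmul 𝕜, smul_smul,
    mul_inv_cancel₀ (Nat.cast_ne_zero.mpr Fintype.card_ne_zero), one_smul]

theorem Matrix.re_dotProduct_mulVec_add_ofReal_smul {n : Type*} [Fintype n]
    (A B : Matrix n n ℂ) (c : ℝ) (x : n → ℂ) :
    (star x ⬝ᵥ ((A + (c : ℂ) • B) *ᵥ x)).re =
      (star x ⬝ᵥ (A *ᵥ x)).re + c * (star x ⬝ᵥ (B *ᵥ x)).re := by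
  rw [add_mulVec, dotProduct_add, smul_mulVec, dotProduct_smul, Complex.add_re, smul_eq_mul,
    Complex.re_ofReal_mul]

section MoveToNumerator

variable {α : Type*} [Field α] [LinearOrder α] [IsStrictOrderedRing α] {a t d : α}

theorem div_le_add_div_sub (ha : 0 ≤ a) (ht : 0 ≤ t) (htd : t < d) :
    a / d ≤ (a + t) / (d - t) := by
  have hdt : 0 < d - t := sub_pos.mpr htd
  calc a / d ≤ a / (d - t) := div_le_div_of_nonneg_left ha hdt (by linarith)
    _ ≤ (a + t) / (d - t) := by gcongr; linarith

theorem div_lt_add_div_sub (ha : 0 ≤ a) (ht : 0 < t) (htd : t < d) :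
    a / d < (a + t) / (d - t) := by
  have hdt : 0 < d - t := sub_pos.mpr htd
  calc a / d ≤ a / (d - t) := div_le_div_of_nonneg_left ha hdt (by linarith)
    _ < (a + t) / (d - t) := by gcongr; linarith

end MoveToNumerator

theorem stmt_0_general (K n : ℕ) (hK : 1 ≤ K)
    (Rc : Fin K → Matrix (Fin n) (Fin n) ℂ) (Rr : Matrix (Fin n) (Fin n) ℂ)
    (hRc : ∀ k, (Rc k).PosSemidef) (hRr : Rr.PosSemidef)
    (h : Fin K → (Fin n → ℂ)) (σ2 : ℝ) (hσ : 0 < σ2)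
    (Rtc : Fin K → Matrix (Fin n) (Fin n) ℂ)
    (hRtc : ∀ k, Rtc k = Rc k + ((K : ℂ))⁻¹ • Rr)
    (γ γt : Fin K → ℝ)
    (hγ : ∀ k, γ k = (star (h k) ⬝ᵥ (Rc k *ᵥ h k)).re /
      ((∑ j ∈ univ.erase k, (star (h k) ⬝ᵥ (Rc j *ᵥ h k)).re)
        + (star (h k) ⬝ᵥ (Rr *ᵥ h k)).re + σ2))
    (hγt : ∀ k, γt k = (star (h k) ⬝ᵥ (Rtc k *ᵥ h k)).re /
      ((∑ j ∈ univ.erase k, (star (h k) ⬝ᵥ (Rtc j *ᵥ h k)).re) + σ2)) :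
    (∀ k, (Rtc k).PosSemidef) ∧
    ((∑ k, Rtc k) = (∑ k, Rc k) + Rr) ∧
    (∀ k, γ k ≤ γt k ∧ (0 < (star (h k) ⬝ᵥ (Rr *ᵥ h k)).re → γ k < γt k)) := by
  have hKpos : (0 : ℝ) < K := Nat.cast_pos.mpr hK
  have : Nonempty (Fin K) := ⟨⟨0, hK⟩⟩
  refine ⟨fun k => hRtc k ▸ (hRc k).add (hRr.smul (by positivity)),
    by simpa [hRtc] using sum_add_inv_card_smul (𝕜 := ℂ) Rc Rr, fun k => ?_⟩
  set q : Matrix (Fin n) (Fin n) ℂ → ℝ := fun M => (star (h k) ⬝ᵥ (M *ᵥ h k)).re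
  have hq : ∀ {M}, M.PosSemidef → 0 ≤ q M := fun hM => hM.re_dotProduct_nonneg (h k)
  set r := q Rr
  set d := ∑ j ∈ univ.erase k, q (Rc j) + r + σ2
  have hqt : ∀ j, q (Rtc j) = q (Rc j) + r / K := fun j => by
    simp only [q, r]
    rw [hRtc, show ((K : ℂ))⁻¹ = (((K : ℝ)⁻¹ : ℝ) : ℂ) by push_cast; rfl,
      re_dotProduct_mulVec_add_ofReal_smul (x := h k), inv_mul_eq_div]
  have hγtk : γt k = (q (Rc k) + r / K) / (d - r / K) := by
    have hspread : ∑ _j ∈ univ.erase k, r / K = r - r / K := by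
      rw [sum_erase_eq_sub (mem_univ k), sum_const, card_univ, Fintype.card_fin, nsmul_eq_mul,
        mul_div_cancel₀ r hKpos.ne']
    rw [hγt]
    change q (Rtc k) / (∑ j ∈ univ.erase k, q (Rtc j) + σ2) = _
    simp only [hqt, sum_add_distrib, hspread]
    ring
  have hrK : r / K < d := by
    have : r / K ≤ r := div_le_self (hq hRr) (Nat.one_le_cast.mpr hK)
    linarith [sum_nonneg fun j (_ : j ∈ univ.erase k) => hq (hRc j)]
  rw [hγ k, hγtk]
  exact ⟨div_le_add_div_sub (hq (hRc k)) (div_nonneg (hq hRr) hKpos.le) hrK,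
    fun hr => div_lt_add_div_sub (hq (hRc k)) (div_pos hr hKpos) hrK⟩

/-- Lemma 1 key step: absorbing the radar covariance equally into the users'
communication covariance matrices preserves PSD-ness and the total transmit
covariance, and does not decrease (generically strictly increases) each SINR. -/
theorem stmt_0 (K n : ℕ) (hK : 1 ≤ K) (hn : 1 ≤ n)
    (Rc : Fin K → Matrix (Fin n) (Fin n) ℂ) (Rr : Matrix (Fin n) (Fin n) ℂ)
    (hRc : ∀ k, (Rc k).PosSemidef) (hRr : Rr.PosSemidef)
    (h : Fin K → (Fin n → ℂ)) (σ2 : ℝ) (hσ : 0 < σ2)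
    (Rtc : Fin K → Matrix (Fin n) (Fin n) ℂ)
    (hRtc : ∀ k, Rtc k = Rc k + ((K : ℂ))⁻¹ • Rr)
    (γ γt : Fin K → ℝ)
    (hγ : ∀ k, γ k = (star (h k) ⬝ᵥ (Rc k *ᵥ h k)).re /
      ((∑ j ∈ univ.erase k, (star (h k) ⬝ᵥ (Rc j *ᵥ h k)).re)
        + (star (h k) ⬝ᵥ (Rr *ᵥ h k)).re + σ2))
    (hγt : ∀ k, γt k = (star (h k) ⬝ᵥ (Rtc k *ᵥ h k)).re /
      ((∑ j ∈ univ.erase k, (star (h k) ⬝ᵥ (Rtc j *ᵥ h k)).re) + σ2)) :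
    (∀ k, (Rtc k).PosSemidef) ∧
    ((∑ k, Rtc k) = (∑ k, Rc k) + Rr) ∧
    (∀ k, γ k ≤ γt k ∧ (0 < (star (h k) ⬝ᵥ (Rr *ᵥ h k)).re → γ k < γt k)) :=
  stmt_0_general K n hK Rc Rr hRc hRr h σ2 hσ Rtc hRtc γ γt hγ hγt
end

section
/- Let K ≥ 1 and n ≥ 1. Let R_c^1, …, R_c^K and R_r be n×n complex positive semidefinite Hermitian matrices, let h^1, …, h^K ∈ ℂ^n, and let σ² > 0. Define R̃_c^k = R_c^k + (1/K)·R_r, γ_k = (h^k)^H R_c^k h^k / ( Σ_{j≠k} (h^k)^H R_c^j h^k + (h^k)^H R_r h^k + σ² ), and γ̃_k = (h^k)^H R̃_c^k h^k / ( Σ_{j≠k} (h^k)^H R̃_c^j h^k + σ² ). Then the sum rate satisfies Σ_{k=1}^K log₂(1 + γ̃_k) ≥ Σ_{k=1}^K log₂(1 + γ_k), with strict inequality if (h^k)^H R_r h^k > 0 for some k. -/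
open Matrix Finset ComplexOrder

/-! Write `q_j = hᴴ R_c^j h` and `r = hᴴ R_r h` for the channel `h` of user `k`. Absorbing
`R_r / K` into every user adds `r / K` to the signal power `q_k` and `(K - 1) r / K` to the
interference, so the denominator loses exactly `r / K` of the radar power it used to carry.
A ratio with nonnegative numerator grows when the same `ε ≥ 0` is added to its numerator and
removed from its denominator, so each SINR, hence each rate, does not decrease. -/

lemma div_le_add_div_sub_s1 {a D ε : ℝ} (ha : 0 ≤ a) (hε : 0 ≤ ε) (hεD : ε < D) :
    a / D ≤ (a + ε) / (D - ε) :=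
  div_le_div₀ (by linarith) (by linarith) (by linarith) (by linarith)

lemma div_lt_add_div_sub_s1 {a D ε : ℝ} (ha : 0 ≤ a) (hε : 0 < ε) (hεD : ε < D) :
    a / D < (a + ε) / (D - ε) :=
  calc a / D < (a + ε) / D := div_lt_div_of_pos_right (by linarith) (by linarith)
    _ ≤ (a + ε) / (D - ε) := div_le_div_of_nonneg_left (by linarith) (by linarith) (by linarith)

lemma re_dotProduct_add_smul_mulVec {n : Type*} [Fintype n] (x : n → ℂ) (A B : Matrix n n ℂ)
    (c : ℝ) :
    (star x ⬝ᵥ ((A + (c : ℂ) • B) *ᵥ x)).re =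
      (star x ⬝ᵥ (A *ᵥ x)).re + c * (star x ⬝ᵥ (B *ᵥ x)).re := by
  rw [add_mulVec, smul_mulVec, dotProduct_add, dotProduct_smul, Complex.add_re, smul_eq_mul,
    Complex.re_ofReal_mul]

lemma one_le_cast_card {ι : Type*} [Fintype ι] (i : ι) : (1 : ℝ) ≤ Fintype.card ι :=
  Nat.one_le_cast.mpr (Fintype.card_pos_iff.mpr ⟨i⟩)

section AbsorbedInterference

variable {ι : Type*} [Fintype ι] [DecidableEq ι] (q : ι → ℝ) (r σ2 : ℝ) (k : ι)

lemma sum_erase_add_div_card_add :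
    ∑ j ∈ univ.erase k, (q j + r / Fintype.card ι) + σ2 =
      (∑ j ∈ univ.erase k, q j + r + σ2) - r / Fintype.card ι := by
  have hcard : (Fintype.card ι : ℝ) ≠ 0 := (zero_lt_one.trans_le (one_le_cast_card k)).ne'
  have hshare : ∑ j ∈ univ.erase k, r / Fintype.card ι =
      Fintype.card ι * (r / Fintype.card ι) - r / Fintype.card ι := by
    rw [sum_erase_eq_sub (mem_univ k), sum_const, card_univ, nsmul_eq_mul]
  rw [sum_add_distrib, hshare, mul_div_cancel₀ r hcard]
  ring

variable {q r σ2}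

lemma div_card_lt_sum_erase_add (hq : ∀ j, 0 ≤ q j) (hr : 0 ≤ r) (hσ : 0 < σ2) :
    r / Fintype.card ι < ∑ j ∈ univ.erase k, q j + r + σ2 := by
  have : r / Fintype.card ι ≤ r := div_le_self hr (one_le_cast_card k)
  have : 0 ≤ ∑ j ∈ univ.erase k, q j := sum_nonneg fun j _ => hq j
  linarith

lemma sinr_le_sinr_absorb (hq : ∀ j, 0 ≤ q j) (hr : 0 ≤ r) (hσ : 0 < σ2) :
    q k / (∑ j ∈ univ.erase k, q j + r + σ2) ≤
      (q k + r / Fintype.card ι) /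
        (∑ j ∈ univ.erase k, (q j + r / Fintype.card ι) + σ2) := by
  rw [sum_erase_add_div_card_add]
  exact div_le_add_div_sub_s1 (hq k) (by positivity) (div_card_lt_sum_erase_add k hq hr hσ)

lemma sinr_lt_sinr_absorb (hq : ∀ j, 0 ≤ q j) (hr : 0 < r) (hσ : 0 < σ2) :
    q k / (∑ j ∈ univ.erase k, q j + r + σ2) <
      (q k + r / Fintype.card ι) /
        (∑ j ∈ univ.erase k, (q j + r / Fintype.card ι) + σ2) := by
  rw [sum_erase_add_div_card_add]
  exact div_lt_add_div_sub_s1 (hq k) (div_pos hr (zero_lt_one.trans_le (one_le_cast_card k)))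
    (div_card_lt_sum_erase_add k hq hr.le hσ)

end AbsorbedInterference

theorem stmt_1_general (K n : ℕ)
    (Rc : Fin K → Matrix (Fin n) (Fin n) ℂ) (Rr : Matrix (Fin n) (Fin n) ℂ)
    (hRc : ∀ k, (Rc k).PosSemidef) (hRr : Rr.PosSemidef)
    (h : Fin K → (Fin n → ℂ)) (σ2 : ℝ) (hσ : 0 < σ2)
    (Rtc : Fin K → Matrix (Fin n) (Fin n) ℂ)
    (hRtc : ∀ k, Rtc k = Rc k + ((K : ℂ))⁻¹ • Rr)
    (γ γt : Fin K → ℝ)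
    (hγ : ∀ k, γ k = (star (h k) ⬝ᵥ (Rc k *ᵥ h k)).re /
      ((∑ j ∈ univ.erase k, (star (h k) ⬝ᵥ (Rc j *ᵥ h k)).re)
        + (star (h k) ⬝ᵥ (Rr *ᵥ h k)).re + σ2))
    (hγt : ∀ k, γt k = (star (h k) ⬝ᵥ (Rtc k *ᵥ h k)).re /
      ((∑ j ∈ univ.erase k, (star (h k) ⬝ᵥ (Rtc j *ᵥ h k)).re) + σ2)) :
    (∑ k, Real.logb 2 (1 + γ k)) ≤ (∑ k, Real.logb 2 (1 + γt k)) ∧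
    ((∃ k, 0 < (star (h k) ⬝ᵥ (Rr *ᵥ h k)).re) →
      (∑ k, Real.logb 2 (1 + γ k)) < (∑ k, Real.logb 2 (1 + γt k))) := by
  have hq : ∀ k j, 0 ≤ (star (h k) ⬝ᵥ (Rc j *ᵥ h k)).re := fun k j =>
    (hRc j).re_dotProduct_nonneg _
  have hr : ∀ k, 0 ≤ (star (h k) ⬝ᵥ (Rr *ᵥ h k)).re := fun k => hRr.re_dotProduct_nonneg _
  have hγt' : ∀ k, γt k = ((star (h k) ⬝ᵥ (Rc k *ᵥ h k)).re +
        (star (h k) ⬝ᵥ (Rr *ᵥ h k)).re / Fintype.card (Fin K)) /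
      (∑ j ∈ univ.erase k, ((star (h k) ⬝ᵥ (Rc j *ᵥ h k)).re +
        (star (h k) ⬝ᵥ (Rr *ᵥ h k)).re / Fintype.card (Fin K)) + σ2) := by
    have hK : ((K : ℂ))⁻¹ = (((K : ℝ)⁻¹ : ℝ) : ℂ) := by push_cast; rfl
    simp only [hγt, hRtc, hK, re_dotProduct_add_smul_mulVec, Fintype.card_fin, inv_mul_eq_div,
      implies_true]
  have hγ_nonneg : ∀ k, 0 ≤ γ k := fun k => by
    rw [hγ]
    have hS : 0 ≤ ∑ j ∈ univ.erase k, (star (h k) ⬝ᵥ (Rc j *ᵥ h k)).re :=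
      sum_nonneg fun j _ => hq k j
    exact div_nonneg (hq k k) (by linarith [hr k])
  have hle : ∀ k ∈ univ, Real.logb 2 (1 + γ k) ≤ Real.logb 2 (1 + γt k) := fun k _ => by
    refine Real.logb_le_logb_of_le one_lt_two (by linarith [hγ_nonneg k]) ?_
    rw [hγ, hγt']
    linarith [sinr_le_sinr_absorb k (hq k) (hr k) hσ]
  refine ⟨sum_le_sum hle, fun ⟨k, hk⟩ => sum_lt_sum hle ⟨k, mem_univ k, ?_⟩⟩
  refine Real.logb_lt_logb one_lt_two (by linarith [hγ_nonneg k]) ?_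
  rw [hγ, hγt']
  linarith [sinr_lt_sinr_absorb k (hq k) hk hσ]

/-- Lemma 1 applied to the sum rate: absorbing the radar covariance equally into
the users' communication covariance matrices does not decrease the sum rate,
strictly increasing it if some user receives positive radar power. -/
theorem stmt_1 (K n : ℕ) (hK : 1 ≤ K) (hn : 1 ≤ n)
    (Rc : Fin K → Matrix (Fin n) (Fin n) ℂ) (Rr : Matrix (Fin n) (Fin n) ℂ)
    (hRc : ∀ k, (Rc k).PosSemidef) (hRr : Rr.PosSemidef)
    (h : Fin K → (Fin n → ℂ)) (σ2 : ℝ) (hσ : 0 < σ2)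
    (Rtc : Fin K → Matrix (Fin n) (Fin n) ℂ)
    (hRtc : ∀ k, Rtc k = Rc k + ((K : ℂ))⁻¹ • Rr)
    (γ γt : Fin K → ℝ)
    (hγ : ∀ k, γ k = (star (h k) ⬝ᵥ (Rc k *ᵥ h k)).re /
      ((∑ j ∈ univ.erase k, (star (h k) ⬝ᵥ (Rc j *ᵥ h k)).re)
        + (star (h k) ⬝ᵥ (Rr *ᵥ h k)).re + σ2))
    (hγt : ∀ k, γt k = (star (h k) ⬝ᵥ (Rtc k *ᵥ h k)).re /
      ((∑ j ∈ univ.erase k, (star (h k) ⬝ᵥ (Rtc j *ᵥ h k)).re) + σ2)) :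
    (∑ k, Real.logb 2 (1 + γ k)) ≤ (∑ k, Real.logb 2 (1 + γt k)) ∧
    ((∃ k, 0 < (star (h k) ⬝ᵥ (Rr *ᵥ h k)).re) →
      (∑ k, Real.logb 2 (1 + γ k)) < (∑ k, Real.logb 2 (1 + γt k))) :=
  stmt_1_general K n Rc Rr hRc hRr h σ2 hσ Rtc hRtc γ γt hγ hγt
end

section
/- Let R̃ be an n×n complex Hermitian matrix with eigenvalues λ̃_1 ≤ λ̃_2 ≤ … ≤ λ̃_n listed in increasing order with multiplicity, and let ṽ_1, …, ṽ_m ∈ ℂ^n be orthonormal eigenvectors of R̃ associated with its m smallest eigenvalues λ̃_1, …, λ̃_m (where 1 ≤ m ≤ n). Let R be an n×n complex positive semidefinite Hermitian matrix satisfying the linearized constraint Σ_{i=1}^m ( λ̃_i + ṽ_i^H (R − R̃) ṽ_i ) ≤ 0. Then the sum of the m smallest eigenvalues of R equals 0, and rank(R) ≤ n − m. -/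
open Matrix Finset ComplexOrder

/-!
The linearized constraint only sees `R̃` through `ṽᵢᴴ R̃ ṽᵢ = λ̃ᵢ`, so it says
`∑ᵢ ṽᵢᴴ R ṽᵢ ≤ 0`. For `R ⪰ 0` every summand is nonnegative, hence zero, hence
`R ṽᵢ = 0`.
The orthonormal `ṽᵢ` thus span an `m`-dimensional subspace of `ker R`, so `rank R ≤ n - m`
and `R` has at least `m` zero eigenvalues; as the eigenvalues are nonnegative and sorted
increasingly, the first `m` of them vanish.
-/

namespace Matrix

theorem linearIndependent_of_star_dotProduct_eq_ite {𝕜 ι κ : Type*} [Field 𝕜]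
    [StarRing 𝕜] [Fintype ι] [DecidableEq ι] [Fintype κ] {v : ι → κ → 𝕜}
    (hv : ∀ i j, star (v i) ⬝ᵥ v j = if i = j then 1 else 0) : LinearIndependent 𝕜 v := by
  rw [Fintype.linearIndependent_iff]
  intro g hg j
  simpa [dotProduct_sum, dotProduct_smul, hv] using congrArg (star (v j) ⬝ᵥ ·) hg

theorem rank_add_card_le_of_linearIndependent {K ι κ μ : Type*} [Field K] [Fintype κ]
    [Fintype μ] {A : Matrix ι κ K} {v : μ → κ → K} (hv : LinearIndependent K v)
    (hAv : ∀ i, A *ᵥ v i = 0) : A.rank + Fintype.card μ ≤ Fintype.card κ := by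
  have hspan : Submodule.span K (Set.range v) ≤ LinearMap.ker A.mulVecLin :=
    Submodule.span_le.mpr (Set.range_subset_iff.mpr hAv)
  have hker : Fintype.card μ ≤ Module.finrank K (LinearMap.ker A.mulVecLin) :=
    (finrank_span_eq_card hv).symm.le.trans (Submodule.finrank_mono hspan)
  have := LinearMap.finrank_range_add_finrank_ker A.mulVecLin
  rw [Module.finrank_fintype_fun_eq_card] at this
  rw [Matrix.rank]
  omega

theorem PosSemidef.mulVec_eq_zero_of_sum_re_le_zero {𝕜 n ι : Type*} [RCLike 𝕜] [Fintype n]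
    [Fintype ι] {A : Matrix n n 𝕜} (hA : A.PosSemidef) {v : ι → n → 𝕜}
    (hsum : ∑ i, RCLike.re (star (v i) ⬝ᵥ A *ᵥ v i) ≤ 0) (i : ι) : A *ᵥ v i = 0 := by
  have hnonneg (j : ι) := RCLike.nonneg_iff.mp (hA.dotProduct_mulVec_nonneg (v j))
  have hre : RCLike.re (star (v i) ⬝ᵥ A *ᵥ v i) = 0 :=
    (Finset.sum_eq_zero_iff_of_nonneg fun j _ ↦ (hnonneg j).1).mp
      (hsum.antisymm (Finset.sum_nonneg fun j _ ↦ (hnonneg j).1)) i (mem_univ i)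
  exact (hA.dotProduct_mulVec_zero_iff (v i)).mp
    (RCLike.ext (by simpa using hre) (by simpa using (hnonneg i).2))

theorem IsHermitian.rank_add_card_eigenvalues_eq_zero {𝕜 n : Type*} [RCLike 𝕜] [Fintype n]
    [DecidableEq n] {A : Matrix n n 𝕜} (hA : A.IsHermitian) :
    A.rank + Fintype.card {i // hA.eigenvalues i = 0} = Fintype.card n := by
  have hcompl : Fintype.card {i // hA.eigenvalues i ≠ 0} =
      Fintype.card n - Fintype.card {i // hA.eigenvalues i = 0} :=
    Fintype.card_subtype_compl _
  have := Fintype.card_subtype_le (hA.eigenvalues · = 0)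
  rw [hA.rank_eq_card_non_zero_eigs]
  omega

end Matrix

theorem Monotone.le_of_lt_card_subtype_le {α : Type*} [Preorder α] [DecidableLE α] {n m : ℕ}
    {f : Fin n → α} (hf : Monotone f) {a : α} (hcard : m ≤ Fintype.card {j // f j ≤ a})
    {i : Fin n} (hi : (i : ℕ) < m) : f i ≤ a := by
  by_contra hia
  have hsub : univ.filter (f · ≤ a) ⊆ Finset.Iio i := fun j hj ↦ by
    simp only [Finset.mem_filter, Finset.mem_univ, true_and] at hj
    exact Finset.mem_Iio.mpr (lt_of_not_ge fun hij ↦ hia ((hf hij).trans hj))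
  have := Finset.card_le_card hsub
  rw [Fin.card_Iio, ← Fintype.card_subtype] at this
  omega

theorem stmt_10_general (n m : ℕ) (hmn : m ≤ n)
    (Rt : Matrix (Fin n) (Fin n) ℂ)
    (lamT : Fin n → ℝ)
    (v : Fin m → (Fin n → ℂ))
    (hON : ∀ i j, star (v i) ⬝ᵥ v j = if i = j then 1 else 0)
    (hEig : ∀ i, Rt *ᵥ v i = (lamT (Fin.castLE hmn i) : ℂ) • v i)
    (R : Matrix (Fin n) (Fin n) ℂ) (hR : R.PosSemidef)
    (lam : Fin n → ℝ) (hmono : Monotone lam)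
    (hperm : ∃ σ : Equiv.Perm (Fin n), lam = hR.isHermitian.eigenvalues ∘ σ)
    (hconstraint : ∑ i : Fin m,
        (lamT (Fin.castLE hmn i) + (star (v i) ⬝ᵥ ((R - Rt) *ᵥ v i)).re) ≤ 0) :
    (∑ i : Fin m, lam (Fin.castLE hmn i) = 0) ∧ R.rank ≤ n - m := by
  obtain ⟨σ, rfl⟩ := hperm
  have hquad (i : Fin m) : star (v i) ⬝ᵥ Rt *ᵥ v i = lamT (Fin.castLE hmn i) := by
    simp [hEig, hON]
  have hsum : ∑ i, (star (v i) ⬝ᵥ R *ᵥ v i).re ≤ 0 := by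
    simpa [sub_mulVec, hquad] using hconstraint
  have hrank := rank_add_card_le_of_linearIndependent
    (linearIndependent_of_star_dotProduct_eq_ite hON) (hR.mulVec_eq_zero_of_sum_re_le_zero hsum)
  have heig := hR.isHermitian.rank_add_card_eigenvalues_eq_zero
  simp only [Fintype.card_fin] at hrank heig
  have hzeros : m ≤ Fintype.card {j // hR.isHermitian.eigenvalues (σ j) ≤ 0} := by
    rw [Fintype.card_congr <| σ.subtypeEquiv (q := (hR.isHermitian.eigenvalues · = 0))
      fun j ↦ (hR.eigenvalues_nonneg (σ j)).ge_iff_eq']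
    omega
  refine ⟨Finset.sum_eq_zero fun i _ ↦ ?_, by omega⟩
  exact (hmono.le_of_lt_card_subtype_le hzeros i.2).antisymm (hR.eigenvalues_nonneg _)

/-- Validity of the SCA constraint (32a): if a PSD matrix `R` satisfies the
linearized constraint `∑ᵢ (λ̃ᵢ + ṽᵢᴴ (R - R̃) ṽᵢ) ≤ 0` built from the `m`
smallest eigenvalues/eigenvectors of a Hermitian matrix `R̃`, then the `m`
smallest eigenvalues of `R` sum to zero and `rank R ≤ n - m`. -/
theorem stmt_10 (n m : ℕ) (hm : 1 ≤ m) (hmn : m ≤ n)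
    (Rt : Matrix (Fin n) (Fin n) ℂ) (hRt : Rt.IsHermitian)
    (lamT : Fin n → ℝ) (hTmono : Monotone lamT)
    (hTperm : ∃ σ : Equiv.Perm (Fin n), lamT = hRt.eigenvalues ∘ σ)
    (v : Fin m → (Fin n → ℂ))
    (hON : ∀ i j, star (v i) ⬝ᵥ v j = if i = j then 1 else 0)
    (hEig : ∀ i, Rt *ᵥ v i = (lamT (Fin.castLE hmn i) : ℂ) • v i)
    (R : Matrix (Fin n) (Fin n) ℂ) (hR : R.PosSemidef)
    (lam : Fin n → ℝ) (hmono : Monotone lam)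
    (hperm : ∃ σ : Equiv.Perm (Fin n), lam = hR.isHermitian.eigenvalues ∘ σ)
    (hconstraint : ∑ i : Fin m,
        (lamT (Fin.castLE hmn i) + (star (v i) ⬝ᵥ ((R - Rt) *ᵥ v i)).re) ≤ 0) :
    (∑ i : Fin m, lam (Fin.castLE hmn i) = 0) ∧ R.rank ≤ n - m :=
  stmt_10_general n m hmn Rt lamT v hON hEig R hR lam hmono hperm hconstraint
end
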